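/- Let U ⊆ ℂ be a conjugate symmetric set, F : U → 𝔎ₙ a stem function, u ∈ E a unit vector (‖u‖ = 1), and x, y ∈ ℝ with x + iy ∈ U and x − iy ∈ U. Set 𝔰 = 1 ⊗ₜ ι(u) ∈ 𝔎ₙ and let κ₊ = algebraMap x + ι(y • u) and κ₋ = algebraMap x − ι(y • u) (both belong to U_σ). Then F(x + iy) = F_σ(κ₊) * ((1/2 : ℝ) • (1 − Complex.I • 𝔰)) + F_σ(κ₋) * ((1/2 : ℝ) • (1 + Complex.I • 𝔰)) and F(x − iy) = F_σ(κ₊) * ((1/2 : ℝ) • (1 + Complex.I • 𝔰)) + F_σ(κ₋) * ((1/2 : ℝ) • (1 − Complex.I • 𝔰)). -/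

import Mathlib

open scoped TensorProduct

/-- The paravector `κ = x + ι v` in the Clifford algebra. -/
noncomputable def paravec {n : ℕ} (Q : QuadraticForm ℝ (EuclideanSpace ℝ (Fin n)))
    (x : ℝ) (v : EuclideanSpace ℝ (Fin n)) : CliffordAlgebra Q :=
  algebraMap ℝ (CliffordAlgebra Q) x + CliffordAlgebra.ι Q v

/-- The eigenvalue `s₊(κ) = x + i‖v‖`. -/
noncomputable def sPlus {n : ℕ} (x : ℝ) (v : EuclideanSpace ℝ (Fin n)) : ℂ :=
  (x : ℂ) + ‖v‖ * Complex.I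

/-- The eigenvalue `s₋(κ) = x - i‖v‖`. -/
noncomputable def sMinus {n : ℕ} (x : ℝ) (v : EuclideanSpace ℝ (Fin n)) : ℂ :=
  (x : ℂ) - ‖v‖ * Complex.I

/-- The idempotent `ι₊(κ) = (1/2) • (1 - i • (1 ⊗ 𝔰_κ))` in the complexification. -/
noncomputable def iotaP {n : ℕ} (Q : QuadraticForm ℝ (EuclideanSpace ℝ (Fin n)))
    (v : EuclideanSpace ℝ (Fin n)) : ℂ ⊗[ℝ] CliffordAlgebra Q :=
  (1/2 : ℝ) • (1 - Complex.I • ((1 : ℂ) ⊗ₜ[ℝ] CliffordAlgebra.ι Q (‖v‖⁻¹ • v)))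

/-- The idempotent `ι₋(κ) = (1/2) • (1 + i • (1 ⊗ 𝔰_κ))` in the complexification. -/
noncomputable def iotaM {n : ℕ} (Q : QuadraticForm ℝ (EuclideanSpace ℝ (Fin n)))
    (v : EuclideanSpace ℝ (Fin n)) : ℂ ⊗[ℝ] CliffordAlgebra Q :=
  (1/2 : ℝ) • (1 + Complex.I • ((1 : ℂ) ⊗ₜ[ℝ] CliffordAlgebra.ι Q (‖v‖⁻¹ • v)))

/-- The conjugation `χ` of the complexification `𝔎ₙ = ℂ ⊗[ℝ] 𝔠ₙ`, determined by
`χ(λ ⊗ a) = (conj λ) ⊗ a`. -/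
noncomputable def chi {n : ℕ} (Q : QuadraticForm ℝ (EuclideanSpace ℝ (Fin n))) :
    (ℂ ⊗[ℝ] CliffordAlgebra Q) →ₐ[ℝ] ℂ ⊗[ℝ] CliffordAlgebra Q :=
  Algebra.TensorProduct.map Complex.conjAe.toAlgHom (AlgHom.id ℝ (CliffordAlgebra Q))

open Classical in
/-- The function `F_σ` induced on paravectors `(x, v)` by a `𝔎ₙ`-valued function `F`. -/
noncomputable def Fsig {n : ℕ} (Q : QuadraticForm ℝ (EuclideanSpace ℝ (Fin n)))
    (F : ℂ → ℂ ⊗[ℝ] CliffordAlgebra Q) (x : ℝ) (v : EuclideanSpace ℝ (Fin n)) :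
    ℂ ⊗[ℝ] CliffordAlgebra Q :=
  if v = 0 then F x
  else F (sPlus x v) * iotaP Q v + F (sMinus x v) * iotaM Q v

open Classical in
/-- The function `f_σ` induced on paravectors `(x, v)` by a complex-valued function `f`. -/
noncomputable def fsig {n : ℕ} (Q : QuadraticForm ℝ (EuclideanSpace ℝ (Fin n)))
    (f : ℂ → ℂ) (x : ℝ) (v : EuclideanSpace ℝ (Fin n)) :
    ℂ ⊗[ℝ] CliffordAlgebra Q :=
  if v = 0 then f x • 1
  else f (sPlus x v) • iotaP Q v + f (sMinus x v) • iotaM Q v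

/-!
For `v ≠ 0` the element `a = i 𝔰_κ` squares to `1`, so `ι₊(κ) = (1 - a)/2` and
`ι₋(κ) = 1 - ι₊(κ)` are complementary idempotents. Along the slice of `u`,
`F_σ(x + ι(y u)) = F(x + iy) ι₊ + F(x - iy) ι₋` for every real `y` (the sign of `y` swaps both
the eigenvalues and the idempotents), so the two values of `F` are read off by multiplying
with `ι₊` and `ι₋`.
-/

open CliffordAlgebra

lemma isIdempotentElem_half_smul_one_sub {A : Type*} [Ring A] [Algebra ℝ A] {a : A}
    (ha : a * a = 1) : IsIdempotentElem ((1/2 : ℝ) • (1 - a)) := by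
  have hsq : (1 - a) * (1 - a) = (2 : ℝ) • (1 - a) := by
    rw [two_smul, mul_sub, sub_mul, sub_mul, one_mul, one_mul, mul_one, ha]; abel
  rw [IsIdempotentElem, smul_mul_smul_comm, hsq, smul_smul]
  norm_num

lemma IsIdempotentElem.recover_mul_add_mul_one_sub {R : Type*} [Ring R] {p : R}
    (hp : IsIdempotentElem p) (a b : R) :
    (a * p + b * (1 - p)) * p + (b * p + a * (1 - p)) * (1 - p) = a ∧
    (a * p + b * (1 - p)) * (1 - p) + (b * p + a * (1 - p)) * p = b := by
  simp only [add_mul, mul_assoc, hp.eq, hp.one_sub.eq, hp.mul_one_sub_self,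
    hp.one_sub_mul_self, mul_zero, add_zero, zero_add]
  constructor
  · rw [← mul_add, add_sub_cancel, mul_one]
  · rw [← mul_add, sub_add_cancel, mul_one]

lemma one_tmul_ι_mul_self {R A M : Type*} [CommRing R] [Ring A] [Algebra R A]
    [AddCommGroup M] [Module R M] (Q : QuadraticForm R M) (m : M) :
    ((1 : A) ⊗ₜ[R] ι Q m) * ((1 : A) ⊗ₜ[R] ι Q m) = algebraMap R _ (Q m) := by
  rw [Algebra.TensorProduct.tmul_mul_tmul, one_mul, ι_sq_scalar,
    Algebra.TensorProduct.algebraMap_apply', Algebra.algebraMap_eq_smul_one]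

section Idempotents

variable {n : ℕ} {Q : QuadraticForm ℝ (EuclideanSpace ℝ (Fin n))}

lemma iotaP_add_iotaM (v : EuclideanSpace ℝ (Fin n)) : iotaP Q v + iotaM Q v = 1 := by
  rw [iotaP, iotaM, ← smul_add, sub_add_add_cancel, ← two_smul ℝ, smul_smul]
  norm_num

lemma iotaM_eq_one_sub_iotaP (v : EuclideanSpace ℝ (Fin n)) : iotaM Q v = 1 - iotaP Q v :=
  eq_sub_of_add_eq' (iotaP_add_iotaM v)

lemma iotaP_neg (v : EuclideanSpace ℝ (Fin n)) : iotaP Q (-v) = iotaM Q v := by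
  rw [iotaP, iotaM, norm_neg, smul_neg, map_neg, TensorProduct.tmul_neg, smul_neg,
    sub_neg_eq_add]

lemma iotaM_neg (v : EuclideanSpace ℝ (Fin n)) : iotaM Q (-v) = iotaP Q v := by
  rw [← iotaP_neg, neg_neg]

lemma iotaP_smul_of_pos {c : ℝ} (hc : 0 < c) (v : EuclideanSpace ℝ (Fin n)) :
    iotaP Q (c • v) = iotaP Q v := by
  rw [iotaP, iotaP, norm_smul, Real.norm_of_nonneg hc.le, smul_smul, mul_inv, mul_comm c⁻¹,
    inv_mul_cancel_right₀ hc.ne']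

lemma iotaM_smul_of_pos {c : ℝ} (hc : 0 < c) (v : EuclideanSpace ℝ (Fin n)) :
    iotaM Q (c • v) = iotaM Q v := by
  rw [iotaM_eq_one_sub_iotaP, iotaM_eq_one_sub_iotaP, iotaP_smul_of_pos hc]

lemma isIdempotentElem_iotaP (hQ : ∀ w, Q w = -‖w‖ ^ 2) {v : EuclideanSpace ℝ (Fin n)}
    (hv : v ≠ 0) : IsIdempotentElem (iotaP Q v) := by
  have hunit : ‖‖v‖⁻¹ • v‖ = 1 := by
    rw [norm_smul, norm_inv, norm_norm, inv_mul_cancel₀ (norm_ne_zero_iff.mpr hv)]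
  refine isIdempotentElem_half_smul_one_sub ?_
  rw [smul_mul_smul_comm, one_tmul_ι_mul_self, hQ, hunit, Complex.I_mul_I, one_pow, map_neg,
    map_one, smul_neg, neg_smul, one_smul, neg_neg]

end Idempotents

section Slice

variable {n : ℕ} {Q : QuadraticForm ℝ (EuclideanSpace ℝ (Fin n))}
  (F : ℂ → ℂ ⊗[ℝ] CliffordAlgebra Q) (x : ℝ) {u : EuclideanSpace ℝ (Fin n)}

lemma Fsig_smul_of_pos (hu : ‖u‖ = 1) {y : ℝ} (hy : 0 < y) :
    Fsig Q F x (y • u)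
      = F (x + y * Complex.I) * iotaP Q u + F (x - y * Complex.I) * iotaM Q u := by
  have hnorm : ‖y • u‖ = y := by rw [norm_smul, hu, mul_one, Real.norm_of_nonneg hy.le]
  have hyu : y • u ≠ 0 := norm_ne_zero_iff.mp (hnorm.symm ▸ hy.ne')
  rw [Fsig, if_neg hyu, sPlus, sMinus, hnorm, iotaP_smul_of_pos hy, iotaM_smul_of_pos hy]

lemma Fsig_smul (hu : ‖u‖ = 1) (y : ℝ) :
    Fsig Q F x (y • u)
      = F (x + y * Complex.I) * iotaP Q u + F (x - y * Complex.I) * iotaM Q u := by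
  rcases lt_trichotomy y 0 with hy | rfl | hy
  · have hu' : ‖-u‖ = 1 := by rw [norm_neg, hu]
    rw [← neg_smul_neg, Fsig_smul_of_pos F x hu' (neg_pos.mpr hy), iotaP_neg, iotaM_neg,
      add_comm, Complex.ofReal_neg, neg_mul, sub_neg_eq_add, ← sub_eq_add_neg]
  · rw [zero_smul, Fsig, if_pos rfl, Complex.ofReal_zero, zero_mul, add_zero, sub_zero,
      ← mul_add, iotaP_add_iotaM, mul_one]
  · exact Fsig_smul_of_pos F x hu hy

end Slice

theorem stmt12_general {n : ℕ}
    (Q : QuadraticForm ℝ (EuclideanSpace ℝ (Fin n)))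
    (hQ : ∀ v : EuclideanSpace ℝ (Fin n), Q v = -‖v‖ ^ 2)
    (F : ℂ → ℂ ⊗[ℝ] CliffordAlgebra Q)
    (u : EuclideanSpace ℝ (Fin n)) (hu : ‖u‖ = 1) (x y : ℝ) :
    F ((x : ℂ) + y * Complex.I)
      = Fsig Q F x (y • u) *
          ((1/2 : ℝ) • (1 - Complex.I • ((1 : ℂ) ⊗ₜ[ℝ] CliffordAlgebra.ι Q u)))
        + Fsig Q F x (-(y • u)) *
          ((1/2 : ℝ) • (1 + Complex.I • ((1 : ℂ) ⊗ₜ[ℝ] CliffordAlgebra.ι Q u))) ∧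
    F ((x : ℂ) - y * Complex.I)
      = Fsig Q F x (y • u) *
          ((1/2 : ℝ) • (1 + Complex.I • ((1 : ℂ) ⊗ₜ[ℝ] CliffordAlgebra.ι Q u)))
        + Fsig Q F x (-(y • u)) *
          ((1/2 : ℝ) • (1 - Complex.I • ((1 : ℂ) ⊗ₜ[ℝ] CliffordAlgebra.ι Q u))) := by
  have hu0 : u ≠ 0 := norm_ne_zero_iff.mp (hu ▸ one_ne_zero)
  have hP : iotaP Q u = (1/2 : ℝ) • (1 - Complex.I • ((1 : ℂ) ⊗ₜ[ℝ] ι Q u)) := by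
    rw [iotaP, hu, inv_one, one_smul]
  have hM : iotaM Q u = (1/2 : ℝ) • (1 + Complex.I • ((1 : ℂ) ⊗ₜ[ℝ] ι Q u)) := by
    rw [iotaM, hu, inv_one, one_smul]
  have hFneg : Fsig Q F x (-(y • u))
      = F (x - y * Complex.I) * iotaP Q u + F (x + y * Complex.I) * iotaM Q u := by
    rw [← neg_smul, Fsig_smul F x hu, Complex.ofReal_neg, neg_mul, ← sub_eq_add_neg,
      sub_neg_eq_add]
  rw [← hP, ← hM, Fsig_smul F x hu, hFneg, iotaM_eq_one_sub_iotaP]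
  obtain ⟨hplus, hminus⟩ :=
    (isIdempotentElem_iotaP hQ hu0).recover_mul_add_mul_one_sub (F (x + y * Complex.I))
      (F (x - y * Complex.I))
  exact ⟨hplus.symm, hminus.symm⟩

/-- representation formula recovering the stem function `F` at `x ± iy` from
the induced function `F_σ` at the paravectors `κ± = x ± ι(y • u)` on the slice of a unit
vector `u`. -/
theorem stmt12 {n : ℕ} (hn : 1 ≤ n)
    (Q : QuadraticForm ℝ (EuclideanSpace ℝ (Fin n)))
    (hQ : ∀ v : EuclideanSpace ℝ (Fin n), Q v = -‖v‖ ^ 2)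
    (U : Set ℂ) (hU : ∀ ζ : ℂ, ζ ∈ U ↔ (starRingEnd ℂ) ζ ∈ U)
    (F : ℂ → ℂ ⊗[ℝ] CliffordAlgebra Q)
    (hF : ∀ ζ ∈ U, F ((starRingEnd ℂ) ζ) = chi Q (F ζ))
    (u : EuclideanSpace ℝ (Fin n)) (hu : ‖u‖ = 1) (x y : ℝ)
    (h1 : (x : ℂ) + y * Complex.I ∈ U) (h2 : (x : ℂ) - y * Complex.I ∈ U) :
    F ((x : ℂ) + y * Complex.I)
      = Fsig Q F x (y • u) *
          ((1/2 : ℝ) • (1 - Complex.I • ((1 : ℂ) ⊗ₜ[ℝ] CliffordAlgebra.ι Q u)))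
        + Fsig Q F x (-(y • u)) *
          ((1/2 : ℝ) • (1 + Complex.I • ((1 : ℂ) ⊗ₜ[ℝ] CliffordAlgebra.ι Q u))) ∧
    F ((x : ℂ) - y * Complex.I)
      = Fsig Q F x (y • u) *
          ((1/2 : ℝ) • (1 + Complex.I • ((1 : ℂ) ⊗ₜ[ℝ] CliffordAlgebra.ι Q u)))
        + Fsig Q F x (-(y • u)) *
          ((1/2 : ℝ) • (1 - Complex.I • ((1 : ℂ) ⊗ₜ[ℝ] CliffordAlgebra.ι Q u))) :=
  stmt12_general Q hQ F u hu x y
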